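/- arXiv:2410.11717 — 3 statements merged into one kernel-verified Lean document; each statement's English description precedes it below -/
import Mathlib

section
/- Let Φ be a based root system and let (Φ, α ↦ −α, d) be an OMRS on (Φ, Φ⁺). Then every tope R of (Φ, α ↦ −α, d) is a quasitope; that is, R is a topal set (for each α ∈ Φ exactly one of α, −α lies in R) and the set R ∩ Φ⁺ is c₂-biclosed in Φ⁺. -/
open Set Pointwise

variable {V : Type*} [AddCommGroup V] [Module ℝ V]

/-- `cone X` is the set of all finite nonnegative linear combinations of elements of `X`. -/
def cone (X : Set V) : Set V :=
  {v | ∃ (n : ℕ) (c : Fin n → ℝ) (x : Fin n → V),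
    (∀ i, 0 ≤ c i) ∧ (∀ i, x i ∈ X) ∧ v = ∑ i, c i • x i}

/-- An oriented matroid structure on the ground set `E ⊆ V`, with involution `x ↦ -x`
and closure operator `d` (only its values on subsets of `E` are relevant). -/
structure IsOrientedMatroidOn (E : Set V) (d : Set V → Set V) : Prop where
  neg_mem : ∀ x ∈ E, -x ∈ E
  neg_ne : ∀ x ∈ E, -x ≠ x
  cx_le_ground : ∀ X, X ⊆ E → d X ⊆ E
  le_cx : ∀ X, X ⊆ E → X ⊆ d X
  cx_mono : ∀ X Y : Set V, X ⊆ Y → Y ⊆ E → d X ⊆ d Y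
  cx_idem : ∀ X, X ⊆ E → d (d X) = d X
  cx_neg : ∀ X, X ⊆ E → d (-X) = -(d X)
  exchange2 : ∀ X, X ⊆ E → ∀ x ∈ E, x ∈ d (X ∪ {-x}) → x ∈ d X
  exchange3 : ∀ X, X ⊆ E → ∀ x ∈ E, ∀ y ∈ E,
    x ∈ d (X ∪ {-y}) → x ∉ d X → y ∈ d ((X \ {y}) ∪ {-x})
  finitary : ∀ X, X ⊆ E → ∀ x ∈ d X, ∃ Y, Y ⊆ X ∧ Y.Finite ∧ x ∈ d Y

/-- The oriented matroid is reduced: `d ∅ = ∅` and `d {x} = {x}` for `x ∈ E`. -/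
def IsReducedOn (E : Set V) (d : Set V → Set V) : Prop :=
  d ∅ = ∅ ∧ ∀ x ∈ E, d {x} = {x}

/-- A tope: a maximal `d`-closed asymmetric subset of `E`. -/
def IsTope (E : Set V) (d : Set V → Set V) (R : Set V) : Prop :=
  R ⊆ E ∧ d R ⊆ R ∧ (∀ x ∈ R, -x ∉ R) ∧
    ∀ R' : Set V, R' ⊆ E → d R' ⊆ R' → (∀ x ∈ R', -x ∉ R') → R ⊆ R' → R' = R

/-- The simple reflections `s_α : v ↦ v - 2B(v,α)α` for `α ∈ Δ`. -/
def simpleReflections (B : LinearMap.BilinForm ℝ V) (Δ : Set V) : Set (V ≃ₗ[ℝ] V) :=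
  {g | ∃ α ∈ Δ, ∀ v : V, g v = v - (2 * B v α) • α}

/-- The Weyl group generated by the simple reflections. -/
def weylGroup (B : LinearMap.BilinForm ℝ V) (Δ : Set V) : Subgroup (V ≃ₗ[ℝ] V) :=
  Subgroup.closure (simpleReflections B Δ)

/-- The root system `Φ = W·Δ`. -/
def rootSystem (B : LinearMap.BilinForm ℝ V) (Δ : Set V) : Set V :=
  {v | ∃ w ∈ weylGroup B Δ, ∃ α ∈ Δ, v = w α}

/-- The positive roots `Φ⁺ = Φ ∩ cone(Δ)`. -/
def positiveRoots (B : LinearMap.BilinForm ℝ V) (Δ : Set V) : Set V :=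
  rootSystem B Δ ∩ cone Δ

/-- A based root system with simple roots `Δ` and symmetric bilinear form `B`. -/
structure IsBasedRootSystem (B : LinearMap.BilinForm ℝ V) (Δ : Set V) : Prop where
  finite : Δ.Finite
  indep : LinearIndependent ℝ ((↑) : Δ → V)
  symm : ∀ u v : V, B u v = B v u
  diag_one : ∀ α ∈ Δ, B α α = 1
  offdiag : ∀ α ∈ Δ, ∀ β ∈ Δ, α ≠ β →
    (∃ m : ℕ, 2 ≤ m ∧ B α β = -Real.cos (Real.pi / (m : ℝ))) ∨ B α β ≤ -1

/-- An oriented matroid root system (OMRS) on `(Φ, Φ⁺)`. -/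
structure IsOMRS (B : LinearMap.BilinForm ℝ V) (Δ : Set V) (d : Set V → Set V) : Prop where
  om : IsOrientedMatroidOn (rootSystem B Δ) d
  reduced : IsReducedOn (rootSystem B Δ) d
  equivariant : ∀ w ∈ weylGroup B Δ, ∀ X, X ⊆ rootSystem B Δ → d (⇑w '' X) = ⇑w '' d X
  positive_closed : d (positiveRoots B Δ) = positiveRoots B Δ
  rank_two : ∀ X, X ⊆ rootSystem B Δ →
    Module.rank ℝ ↥(Submodule.span ℝ X) ≤ 2 → d X = cone X ∩ rootSystem B Δ

/-- `A` is `c₂`-closed in `P`. -/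
def C2Closed (P A : Set V) : Prop :=
  ∀ α ∈ A, ∀ β ∈ A, ∀ γ ∈ P, γ ∈ cone {α, β} → γ ∈ A

/-- `A` is `c₂`-biclosed in `P`. -/
def C2Biclosed (P A : Set V) : Prop :=
  C2Closed P A ∧ C2Closed P (P \ A)

/-- A root system is clean if every `c₂`-biclosed set of positive roots gives a tope of
the RRS oriented matroid `(Φ, -, cone_Φ)`. -/
def IsClean (B : LinearMap.BilinForm ℝ V) (Δ : Set V) : Prop :=
  ∀ A, A ⊆ positiveRoots B Δ → C2Biclosed (positiveRoots B Δ) A →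
    IsTope (rootSystem B Δ) (fun X => cone X ∩ rootSystem B Δ)
      (A ∪ (-(positiveRoots B Δ \ A)))


lemma rank_pair_le_two (a b : V) :
    Module.rank ℝ ↥(Submodule.span ℝ ({a, b} : Set V)) ≤ 2 := by
  refine (rank_span_le _).trans ?_
  refine (Cardinal.mk_insert_le).trans ?_
  rw [Cardinal.mk_singleton]
  norm_num

lemma cone_neg_pair {a b v : V} (h : v ∈ cone ({a, b} : Set V)) :
    -v ∈ cone ({-a, -b} : Set V) := by
  obtain ⟨n, c, x, hc, hx, rfl⟩ := h
  refine ⟨n, c, fun i => -(x i), hc, fun i => ?_, ?_⟩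
  · have := hx i
    simp only [Set.mem_insert_iff, Set.mem_singleton_iff] at this
    rcases this with h | h <;> simp [h]
  · simp [smul_neg, Finset.sum_neg_distrib]

/-- every tope of an OMRS is a quasitope: it is topal and its set of
positive elements is `c₂`-biclosed in `Φ⁺`. -/
theorem tope_is_quasitope [FiniteDimensional ℝ V]
    (B : LinearMap.BilinForm ℝ V) (Δ : Set V)
    (hbrs : IsBasedRootSystem B Δ)
    (d : Set V → Set V) (hd : IsOMRS B Δ d)
    (R : Set V) (hR : IsTope (rootSystem B Δ) d R) :
    (R ⊆ rootSystem B Δ ∧ ∀ x ∈ rootSystem B Δ, (x ∈ R ↔ -x ∉ R)) ∧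
      C2Biclosed (positiveRoots B Δ) (R ∩ positiveRoots B Δ) := by
  obtain ⟨hRE, hdR, hasym, hmax⟩ := hR
  set E := rootSystem B Δ with hE
  have hdRR : d R = R := subset_antisymm hdR (hd.om.le_cx R hRE)
  -- topal property
  have topal : ∀ x ∈ E, x ∉ R → -x ∈ R := by
    intro x hxE hxR
    by_contra hnx
    have hsub : R ∪ {x} ⊆ E := Set.union_subset hRE (by simpa using hxE)
    set R' := d (R ∪ {x}) with hR'
    have hR'E : R' ⊆ E := hd.om.cx_le_ground _ hsub
    have hRR' : R ∪ {x} ⊆ R' := hd.om.le_cx _ hsub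
    have hxx : R ∪ {x} = R ∪ {-(-x)} := by rw [neg_neg]
    -- -x ∉ R'
    have hnxR' : -x ∉ R' := by
      intro h
      rw [hR', hxx] at h
      have := hd.om.exchange2 R hRE (-x) (hd.om.neg_mem x hxE) h
      rw [hdRR] at this
      exact hnx this
    -- step B
    have stepB : ∀ y, y ∈ R' → y ∉ R → -x ∈ d (R ∪ {-y}) := by
      intro y hy hyR
      have hyE : y ∈ E := hR'E hy
      have h1 : y ∈ d (R ∪ {-(-x)}) := by rw [← hxx]; exact hy
      have h2 : y ∉ d R := by rw [hdRR]; exact hyR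
      have := hd.om.exchange3 R hRE y hyE (-x) (hd.om.neg_mem x hxE) h1 h2
      rwa [Set.diff_singleton_eq_self hnx] at this
    -- R' asymmetric
    have hasym' : ∀ y ∈ R', -y ∉ R' := by
      intro y hy hny
      by_cases hyR : y ∈ R
      · have hnyR : -y ∉ R := hasym y hyR
        have := stepB (-y) hny hnyR
        rw [neg_neg, Set.union_eq_self_of_subset_right (by simpa using hyR), hdRR] at this
        exact hnx this
      · by_cases hnyR : -y ∈ R
        · have := stepB y hy hyR
          rw [Set.union_eq_self_of_subset_right (by simpa using hnyR), hdRR] at this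
          exact hnx this
        · have h1 : -x ∈ d (R ∪ {-y}) := stepB y hy hyR
          have h2 : -x ∈ d (R ∪ {y}) := by
            have := stepB (-y) hny hnyR
            rwa [neg_neg] at this
          have hsub2 : R ∪ {y} ⊆ R' := Set.union_subset (hRR'.trans' Set.subset_union_left)
            (by simpa using hy)
          have : d (R ∪ {y}) ⊆ R' := by
            have := hd.om.cx_mono (R ∪ {y}) R' hsub2 hR'E
            rwa [hR', hd.om.cx_idem _ hsub] at this
          exact hnxR' (this h2)
    have hclosed' : d R' ⊆ R' := by rw [hR', hd.om.cx_idem _ hsub]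
    have := hmax R' hR'E hclosed' hasym' (hRR'.trans' Set.subset_union_left)
    exact hxR (this ▸ hRR' (Set.mem_union_right _ rfl))
  have hposE : positiveRoots B Δ ⊆ E := Set.inter_subset_left
  -- d of a pair
  have dpair : ∀ a ∈ E, ∀ b ∈ E, d {a, b} = cone {a, b} ∩ E := by
    intro a ha b hb
    exact hd.rank_two {a, b} (by rintro v (rfl | rfl) <;> assumption) (rank_pair_le_two a b)
  constructor
  · refine ⟨hRE, fun x hx => ⟨fun h => hasym x h, fun h => ?_⟩⟩
    by_contra hxR
    exact h (topal x hx hxR)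
  constructor
  · rintro α ⟨hαR, hαP⟩ β ⟨hβR, hβP⟩ γ hγP hcone
    refine ⟨?_, hγP⟩
    have hγ : γ ∈ d {α, β} := by
      rw [dpair α (hposE hαP) β (hposE hβP)]
      exact ⟨hcone, hγP.1⟩
    have : d {α, β} ⊆ R := by
      have := hd.om.cx_mono {α, β} R (by rintro v (rfl | rfl) <;> assumption) hRE
      rwa [hdRR] at this
    exact this hγ
  · rintro α ⟨hαP, hαR⟩ β ⟨hβP, hβR⟩ γ hγP hcone
    refine ⟨hγP, fun hγ => ?_⟩
    have hnα : -α ∈ R := topal α (hposE hαP) (fun h => hαR ⟨h, hαP⟩)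
    have hnβ : -β ∈ R := topal β (hposE hβP) (fun h => hβR ⟨h, hβP⟩)
    have hnγ : -γ ∈ d {-α, -β} := by
      rw [dpair (-α) (hRE hnα) (-β) (hRE hnβ)]
      exact ⟨cone_neg_pair hcone, hd.om.neg_mem γ (hposE hγP)⟩
    have : d {-α, -β} ⊆ R := by
      have := hd.om.cx_mono {-α, -β} R (by rintro v (rfl | rfl) <;> assumption) hRE
      rwa [hdRR] at this
    exact hasym γ hγ.1 (this hnγ)
end

section
/- Let V be a real vector space and let Γ ⊆ V ∖ {0} satisfy Γ = −Γ. Then the triple (Γ, γ ↦ −γ, cone_Γ) is an oriented matroid; that is, cone_Γ is a closure operator on subsets of Γ (X ⊆ cone_Γ(X); X ⊆ Y implies cone_Γ(X) ⊆ cone_Γ(Y); cone_Γ(cone_Γ(X)) = cone_Γ(X)) and it satisfies: (1) cone_Γ(−X) = −cone_Γ(X); (2) if x ∈ Γ and x ∈ cone_Γ(X ∪ {−x}) then x ∈ cone_Γ(X); (3) if x ∈ cone_Γ(X ∪ {−y}) and x ∉ cone_Γ(X), then y ∈ cone_Γ((X ∖ {y}) ∪ {−x}); (4) if x ∈ cone_Γ(X)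 then x ∈ cone_Γ(Y) for some finite subset Y ⊆ X. -/
open Set Pointwise

variable {V : Type*} [AddCommGroup V] [Module ℝ V]

section ConeLemmas

variable {X Y : Set V}

lemma mem_cone {x : V} (hx : x ∈ X) : x ∈ cone X :=
  ⟨1, fun _ => 1, fun _ => x, fun _ => zero_le_one, fun _ => hx, by simp⟩

lemma cone_zero (X : Set V) : (0 : V) ∈ cone X :=
  ⟨0, fun i => i.elim0, fun i => i.elim0, fun i => i.elim0, fun i => i.elim0, by simp⟩

lemma cone_mono (h : X ⊆ Y) : cone X ⊆ cone Y := by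
  rintro v ⟨n, c, x, hc, hx, rfl⟩
  exact ⟨n, c, x, hc, fun i => h (hx i), rfl⟩

lemma cone_add {a b : V} (ha : a ∈ cone X) (hb : b ∈ cone X) : a + b ∈ cone X := by
  obtain ⟨n, c, x, hc, hx, rfl⟩ := ha
  obtain ⟨m, d, y, hd, hy, rfl⟩ := hb
  refine ⟨n + m, Fin.append c d, Fin.append x y, ?_, ?_, ?_⟩
  · intro i
    refine Fin.addCases (fun j => ?_) (fun j => ?_) i <;>
      simp [Fin.append_left, Fin.append_right, hc _, hd _]
  · intro i
    refine Fin.addCases (fun j => ?_) (fun j => ?_) i <;>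
      simp [Fin.append_left, Fin.append_right, hx _, hy _]
  · rw [Fin.sum_univ_add]
    simp [Fin.append_left, Fin.append_right]

lemma cone_smul {r : ℝ} (hr : 0 ≤ r) {a : V} (ha : a ∈ cone X) : r • a ∈ cone X := by
  obtain ⟨n, c, x, hc, hx, rfl⟩ := ha
  exact ⟨n, fun i => r * c i, x, fun i => mul_nonneg hr (hc i), hx,
    by simp [Finset.smul_sum, mul_smul]⟩

lemma cone_sum {ι : Type*} (s : Finset ι) (f : ι → V) (h : ∀ i ∈ s, f i ∈ cone X) :
    ∑ i ∈ s, f i ∈ cone X := by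
  classical
  induction s using Finset.induction with
  | empty => simpa using cone_zero X
  | @insert a s hni ih =>
    rw [Finset.sum_insert hni]
    exact cone_add (h _ (Finset.mem_insert_self _ _))
      (ih fun i hi => h i (Finset.mem_insert_of_mem hi))

lemma cone_cone : cone (cone X) ⊆ cone X := by
  rintro v ⟨n, c, x, hc, hx, rfl⟩
  exact cone_sum _ _ fun i _ => cone_smul (hc i) (hx i)

lemma neg_mem_cone_neg {a : V} (ha : a ∈ cone X) : -a ∈ cone (-X) := by
  obtain ⟨n, c, x, hc, hx, rfl⟩ := ha
  refine ⟨n, c, fun i => -(x i), hc, fun i => by simpa using hx i, ?_⟩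
  simp [smul_neg]

lemma cone_neg (X : Set V) : cone (-X) = -cone X := by
  ext v
  constructor
  · intro h
    have := neg_mem_cone_neg h
    rw [neg_neg] at this
    simpa using this
  · intro h
    have : -v ∈ cone X := h
    simpa using neg_mem_cone_neg this

lemma cone_union_singleton {w v : V} (h : v ∈ cone (X ∪ {w})) :
    ∃ u ∈ cone X, ∃ t : ℝ, 0 ≤ t ∧ v = u + t • w := by
  classical
  obtain ⟨n, c, x, hc, hx, rfl⟩ := h
  refine ⟨∑ i ∈ Finset.univ.filter (fun i => ¬ x i = w), c i • x i, ?_,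
    ∑ i ∈ Finset.univ.filter (fun i => x i = w), c i, ?_, ?_⟩
  · refine cone_sum _ _ fun i hi => ?_
    simp only [Finset.mem_filter] at hi
    refine cone_smul (hc i) (mem_cone ?_)
    rcases hx i with h' | h'
    · exact h'
    · exact absurd h' hi.2
  · exact Finset.sum_nonneg fun i _ => hc i
  · rw [← Finset.sum_filter_add_sum_filter_not Finset.univ (fun i => x i = w)
      (fun i => c i • x i)]
    rw [add_comm]
    congr 1
    rw [Finset.sum_smul]
    refine Finset.sum_congr rfl fun i hi => ?_
    simp only [Finset.mem_filter] at hi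
    rw [hi.2]

end ConeLemmas

/-- for `Γ ⊆ V \\ {0}` with `Γ = -Γ`, the triple `(Γ, γ ↦ -γ, cone_Γ)`
is an oriented matroid. -/
theorem coneGamma_isOrientedMatroid (Γ : Set V) (h0 : (0 : V) ∉ Γ) (hneg : -Γ = Γ) :
    IsOrientedMatroidOn Γ (fun X => cone X ∩ Γ) := by
  have hnegmem : ∀ x ∈ Γ, -x ∈ Γ := fun x hx => by
    rw [← hneg]; simpa using hx
  constructor
  · exact hnegmem
  · intro x hx h
    apply h0
    have hx0 : x = 0 := by
      have h2 : (2 : ℝ) • x = 0 := by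
        rw [two_smul]
        nth_rewrite 1 [← h]
        simp
      exact (smul_eq_zero.mp h2).resolve_left (by norm_num)
    rwa [← hx0]
  · intro X hX
    exact inter_subset_right
  · intro X hX
    exact subset_inter (fun x hx => mem_cone hx) hX
  · intro X Y hXY hY
    exact inter_subset_inter_left _ (cone_mono hXY)
  · intro X hX
    refine le_antisymm ?_ (subset_inter (fun x hx => mem_cone hx) inter_subset_right)
    refine inter_subset_inter_left _ ?_
    exact (cone_mono inter_subset_left).trans cone_cone
  · intro X hX
    have : -(cone X ∩ Γ) = -cone X ∩ -Γ := by
      ext v; simp [Set.mem_neg, Set.mem_inter_iff]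
    rw [this, hneg, cone_neg]
  · intro X hX x hxΓ hx
    obtain ⟨u, hu, t, ht, hvt⟩ := cone_union_singleton hx.1
    refine ⟨?_, hxΓ⟩
    have h1 : (1 + t) • x = u := by
      linear_combination (norm := module) hvt
    have hpos : (0 : ℝ) < 1 + t := by linarith
    have : x = (1 + t)⁻¹ • u := by
      rw [← h1, inv_smul_smul₀ hpos.ne']
    rw [this]
    exact cone_smul (inv_nonneg.mpr hpos.le) hu
  · intro X hX x hxΓ y hyΓ hxmem hxnot
    have hxnotc : x ∉ cone X := fun h => hxnot ⟨h, hxΓ⟩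
    refine ⟨?_, hyΓ⟩
    by_cases hyX : y ∈ X
    · have hsub : X ∪ {-y} ⊆ ((X \ {y}) ∪ {-y}) ∪ {y} := by
        intro z hz
        rcases hz with hz | hz
        · by_cases hzy : z = y
          · exact Or.inr hzy
          · exact Or.inl (Or.inl ⟨hz, hzy⟩)
        · exact Or.inl (Or.inr hz)
      have hxc2 := cone_mono hsub hxmem.1
      obtain ⟨u, hu, s, hs, h1⟩ := cone_union_singleton hxc2
      obtain ⟨v, hv, t, ht, h2⟩ := cone_union_singleton hu
      rcases le_or_gt t s with hts | hts
      · exfalso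
        apply hxnotc
        have hx' : x = v + (s - t) • y := by
          linear_combination (norm := module) h1 + h2
        rw [hx']
        exact cone_add (cone_mono diff_subset hv)
          (cone_smul (by linarith) (mem_cone hyX))
      · have hy : (t - s) • y = v + (-x) := by
          linear_combination (norm := module) h1 + h2
        have hpos : (0 : ℝ) < t - s := sub_pos.2 hts
        have hy' : y = (t - s)⁻¹ • (v + (-x)) := by
          rw [← hy, inv_smul_smul₀ hpos.ne']
        have hm : (t - s)⁻¹ • (v + (-x)) ∈ cone ((X \ {y}) ∪ {-x}) := by
          refine cone_smul (inv_nonneg.mpr hpos.le) (cone_add ?_ (mem_cone ?_))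
          · exact cone_mono subset_union_left hv
          · exact Or.inr rfl
        rwa [← hy'] at hm
    · have hXd : X \ {y} = X := diff_singleton_eq_self hyX
      obtain ⟨v, hv, t, ht, h1⟩ := cone_union_singleton hxmem.1
      rcases eq_or_lt_of_le ht with rfl | htpos
      · exfalso
        apply hxnotc
        have hxv : x = v := by simpa using h1
        rw [hxv]; exact hv
      · have hy : t • y = v + (-x) := by
          linear_combination (norm := module) h1
        have hy' : y = t⁻¹ • (v + (-x)) := by
          rw [← hy, inv_smul_smul₀ htpos.ne']
        have hm : t⁻¹ • (v + (-x)) ∈ cone ((X \ {y}) ∪ {-x}) := by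
          rw [hXd]
          refine cone_smul (inv_nonneg.mpr htpos.le) (cone_add ?_ (mem_cone ?_))
          · exact cone_mono subset_union_left hv
          · exact Or.inr rfl
        rwa [← hy'] at hm
  · intro X hX x hx
    obtain ⟨⟨n, c, xs, hc, hxs, hxeq⟩, hxΓ⟩ := hx
    refine ⟨Set.range xs, ?_, Set.finite_range xs, ?_, hxΓ⟩
    · rintro v ⟨i, rfl⟩; exact hxs i
    · exact ⟨n, c, xs, hc, fun i => ⟨i, rfl⟩, hxeq⟩
end

section
/- Let Φ be a based root system (possibly infinite) and let (Φ, α ↦ −α, d) be an OMRS on (Φ, Φ⁺). Then for every w ∈ W, the set w·Φ⁺ is a tope of (Φ, α ↦ −α, d). In particular, Φ⁺ itself is a tope of every OMRS on (Φ, Φ⁺). -/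
open Set Pointwise

variable {V : Type*} [AddCommGroup V] [Module ℝ V]

/-!
`Φ⁺` is `d`-closed by the OMRS axioms, and asymmetric because `cone Δ` is pointed (`Δ` is
linearly independent). It is maximal because every root is positive or negative. This is the
classical fact that `ℓ (w s_α) > ℓ w` forces `w α ∈ cone Δ`, proved by induction on `ℓ w`:
`w` factors through the dihedral subgroup `⟨s_α, s_β⟩` for some `s_β` shortening `w`, and there
the alternating words send `α` to combinations of `α` and `β` whose coefficients are values
`S_k(-2 B(α, β))` of Chebyshev polynomials, nonnegative below the order of `s_α s_β`.
Finally, `d` is `W`-equivariant, so `W` permutes the topes and every `w • Φ⁺` is a tope.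
-/

section WordLength

variable {G : Type*} [Group G]

/-- For `g ∉ Subgroup.closure S` the set is empty and `wordLength S g = 0`. -/
noncomputable def wordLength (S : Set G) (g : G) : ℕ :=
  sInf {n | ∃ l : List G, (∀ x ∈ l, x ∈ S) ∧ l.prod = g ∧ l.length = n}

variable {S : Set G} {g h s : G}

theorem wordLength_prod_le {l : List G} (hl : ∀ x ∈ l, x ∈ S) :
    wordLength S l.prod ≤ l.length :=
  Nat.sInf_le ⟨l, hl, rfl, rfl⟩

theorem wordLength_le_one (hs : s ∈ S) : wordLength S s ≤ 1 := by
  simpa using wordLength_prod_le (l := [s]) (by simpa using hs)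

variable (hS : ∀ s ∈ S, s * s = 1)
include hS

theorem exists_list_length_eq_wordLength (hg : g ∈ Subgroup.closure S) :
    ∃ l : List G, (∀ x ∈ l, x ∈ S) ∧ l.prod = g ∧ l.length = wordLength S g := by
  have hinv : S⁻¹ ⊆ S := fun x hx => by
    have hx' := mul_eq_one_iff_eq_inv.1 (hS _ (Set.mem_inv.1 hx))
    rw [inv_inv] at hx'
    exact hx' ▸ Set.mem_inv.1 hx
  rw [← Subgroup.mem_toSubmonoid, Subgroup.closure_toSubmonoid,
    Set.union_eq_self_of_subset_right hinv] at hg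
  obtain ⟨l, hl, rfl⟩ := Submonoid.exists_list_of_mem_closure hg
  exact Nat.sInf_mem (s := {n | ∃ l' : List G, (∀ x ∈ l', x ∈ S) ∧ l'.prod = l.prod ∧
    l'.length = n}) ⟨l.length, l, hl, rfl, rfl⟩

theorem eq_one_of_wordLength_eq_zero (hg : g ∈ Subgroup.closure S)
    (h0 : wordLength S g = 0) : g = 1 := by
  obtain ⟨l, -, rfl, hl⟩ := exists_list_length_eq_wordLength hS hg
  simp [List.length_eq_zero_iff.1 (hl.trans h0)]

theorem wordLength_mul_le_of_subset {I : Set G} (hIS : I ⊆ S) (hg : g ∈ Subgroup.closure S)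
    (hh : h ∈ Subgroup.closure I) :
    wordLength S (g * h) ≤ wordLength S g + wordLength I h := by
  obtain ⟨l₁, hl₁, rfl, hlen₁⟩ := exists_list_length_eq_wordLength hS hg
  obtain ⟨l₂, hl₂, rfl, hlen₂⟩ :=
    exists_list_length_eq_wordLength (fun s hs => hS s (hIS hs)) hh
  rw [← hlen₁, ← hlen₂, ← List.length_append, ← List.prod_append]
  exact wordLength_prod_le fun x hx => (List.mem_append.1 hx).elim (hl₁ x) (hIS <| hl₂ x ·)

theorem wordLength_mul_le (hg : g ∈ Subgroup.closure S) (hh : h ∈ Subgroup.closure S) :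
    wordLength S (g * h) ≤ wordLength S g + wordLength S h :=
  wordLength_mul_le_of_subset hS le_rfl hg hh

theorem wordLength_mul_gen_le (hg : g ∈ Subgroup.closure S) (hs : s ∈ S) :
    wordLength S (g * s) ≤ wordLength S g + 1 :=
  (wordLength_mul_le hS hg (Subgroup.subset_closure hs)).trans
    (Nat.add_le_add_left (wordLength_le_one hs) _)

theorem wordLength_gen_mul_le (hg : g ∈ Subgroup.closure S) (hs : s ∈ S) :
    wordLength S (s * g) ≤ wordLength S g + 1 :=
  (wordLength_mul_le hS (Subgroup.subset_closure hs) hg).trans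
    (by have := wordLength_le_one hs; omega)

theorem wordLength_le_wordLength_mul_gen_add_one (hg : g ∈ Subgroup.closure S) (hs : s ∈ S) :
    wordLength S g ≤ wordLength S (g * s) + 1 := by
  simpa [mul_assoc, hS s hs] using
    wordLength_mul_gen_le hS (mul_mem hg (Subgroup.subset_closure hs)) hs

theorem exists_wordLength_mul_gen_lt (hg : g ∈ Subgroup.closure S) (h0 : wordLength S g ≠ 0) :
    ∃ s ∈ S, wordLength S (g * s) < wordLength S g := by
  obtain ⟨l, hl, rfl, hlen⟩ := exists_list_length_eq_wordLength hS hg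
  obtain ⟨l, s, rfl⟩ := (List.eq_nil_or_concat l).resolve_left (by rintro rfl; simp_all)
  rw [List.concat_eq_append] at hl hlen ⊢
  have hs : s ∈ S := hl s (by simp)
  refine ⟨s, hs, ?_⟩
  have hle := wordLength_prod_le fun x hx => hl x (List.mem_append_left _ hx)
  simp only [List.prod_append, List.prod_singleton, mul_assoc, hS s hs,
    mul_one, List.length_append, List.length_singleton] at hle hlen ⊢
  omega

/-- `ε (g * s) = -ε g` makes the parity of `wordLength S` change with every generator. -/
theorem wordLength_mul_gen_ne (ε : G →* ℝˣ) (hε : ∀ s ∈ S, ε s = -1)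
    (hg : g ∈ Subgroup.closure S) (hs : s ∈ S) :
    wordLength S (g * s) ≠ wordLength S g := by
  have parity : ∀ x ∈ Subgroup.closure S, ε x = (-1) ^ wordLength S x := fun x hx => by
    obtain ⟨l, hl, rfl, hlen⟩ := exists_list_length_eq_wordLength hS hx
    rw [← hlen, map_list_prod,
      List.prod_eq_pow_card _ (-1) (by simpa using fun x hx => hε x (hl x hx)), List.length_map]
  intro h
  have := parity _ (mul_mem hg (Subgroup.subset_closure hs))
  rw [map_mul, hε s hs, h, parity g hg] at this
  have := congrArg (fun u : ℝˣ => (u : ℝ)) this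
  push_cast at this
  rcases neg_one_pow_eq_or ℝ (wordLength S g) with h1 | h1 <;> rw [h1] at this <;> norm_num at this

theorem wordLength_mul_gen_add_wordLength_gen_mul {I : Set G} (hIS : I ⊆ S) {v t : G}
    (hv : v ∈ Subgroup.closure S) (ht : t ∈ Subgroup.closure I) (hs : s ∈ I)
    (hlt : wordLength S (v * s) < wordLength S v)
    (hadd : wordLength S v + wordLength I t = wordLength S (v * t)) :
    wordLength S (v * s) + wordLength I (s * t) = wordLength S (v * t) := by
  have hI : ∀ s ∈ I, s * s = 1 := fun s hs => hS s (hIS hs)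
  have hsub := wordLength_mul_le_of_subset hS hIS
    (mul_mem hv (Subgroup.subset_closure (hIS hs))) (mul_mem (Subgroup.subset_closure hs) ht)
  rw [mul_assoc, ← mul_assoc s, hI s hs, one_mul] at hsub
  have := wordLength_gen_mul_le hI ht hs
  omega

/-- Take `v` of minimal length among the length-additive factorizations `g = v * t` with
`t ∈ ⟨a, b⟩`, of which `g = (g * b) * b` is one. -/
theorem exists_mul_of_wordLength_mul_gen_lt (ε : G →* ℝˣ) (hε : ∀ s ∈ S, ε s = -1) {a b : G}
    (ha : a ∈ S) (hb : b ∈ S) (hg : g ∈ Subgroup.closure S)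
    (hga : wordLength S g < wordLength S (g * a)) (hgb : wordLength S (g * b) < wordLength S g) :
    ∃ v ∈ Subgroup.closure S, ∃ t ∈ Subgroup.closure {a, b}, g = v * t ∧
      wordLength S v < wordLength S g ∧ wordLength S v < wordLength S (v * a) ∧
      wordLength S v < wordLength S (v * b) ∧
      wordLength {a, b} t < wordLength {a, b} (t * a) := by
  have hIS : ({a, b} : Set G) ⊆ S := Set.pair_subset ha hb
  have hI : ∀ s ∈ ({a, b} : Set G), s * s = 1 := fun s hs => hS s (hIS hs)
  set F := {v | v ∈ Subgroup.closure S ∧ v⁻¹ * g ∈ Subgroup.closure {a, b} ∧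
    wordLength S v + wordLength {a, b} (v⁻¹ * g) = wordLength S g}
  have hgbF : g * b ∈ F := by
    have hbb : (g * b)⁻¹ * g = b := by
      rw [mul_inv_rev, inv_eq_of_mul_eq_one_left (hS b hb), inv_mul_cancel_right]
    have hgbb := wordLength_mul_le_of_subset hS hIS (mul_mem hg (Subgroup.subset_closure hb))
      (Subgroup.subset_closure (show b ∈ ({a, b} : Set G) by simp))
    rw [mul_assoc, hS b hb, mul_one] at hgbb
    have := wordLength_le_one (S := {a, b}) (s := b) (by simp)
    refine ⟨mul_mem hg (Subgroup.subset_closure hb), ?_, ?_⟩ <;> rw [hbb]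
    exacts [Subgroup.subset_closure (by simp), by omega]
  obtain ⟨v, ⟨hv, ht, hvt⟩, hmin⟩ :=
    (InvImage.wf (wordLength S) wellFounded_lt).has_min F ⟨_, hgbF⟩
  have hv_gen : ∀ s ∈ ({a, b} : Set G), wordLength S v < wordLength S (v * s) := by
    intro s hs
    by_contra! hle
    have hlt := lt_of_le_of_ne hle (wordLength_mul_gen_ne hS ε hε hv (hIS hs))
    have hst : (v * s)⁻¹ * g = s * (v⁻¹ * g) := by
      rw [mul_inv_rev, inv_eq_of_mul_eq_one_left (hI s hs), mul_assoc]
    refine hmin (v * s) ⟨mul_mem hv (Subgroup.subset_closure (hIS hs)), ?_, ?_⟩ hlt <;>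
      rw [hst]
    · exact mul_mem (Subgroup.subset_closure hs) ht
    · simpa using wordLength_mul_gen_add_wordLength_gen_mul hS hIS hv ht hs hlt (by simpa)
  refine ⟨v, hv, v⁻¹ * g, ht, (mul_inv_cancel_left v g).symm, ?_, hv_gen a (by simp),
    hv_gen b (by simp), ?_⟩
  · exact (not_lt.1 (hmin _ hgbF)).trans_lt hgb
  by_contra! hle
  have hlt := lt_of_le_of_ne hle
    (wordLength_mul_gen_ne hI ε (fun s hs => hε s (hIS hs)) ht (s := a) (by simp))
  have := wordLength_mul_le_of_subset hS hIS hv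
    (mul_mem ht (Subgroup.subset_closure (show a ∈ ({a, b} : Set G) by simp)))
  rw [← mul_assoc, mul_inv_cancel_left] at this
  omega

end WordLength

section Dihedral

open CoxeterSystem (alternatingWord alternatingWord_succ alternatingWord_succ')

theorem mem_of_mem_alternatingWord {ι : Type*} {a b x : ι} {n : ℕ}
    (hx : x ∈ alternatingWord a b n) : x = a ∨ x = b := by
  induction n generalizing a b with
  | zero => simp [alternatingWord] at hx
  | succ n ih =>
    rw [alternatingWord_succ, List.concat_eq_append, List.mem_append, List.mem_singleton] at hx
    exact hx.elim (fun h => (ih h).symm) Or.inr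

variable {G : Type*} [Group G] {a b : G}

theorem prod_alternatingWord_succ (a b : G) (n : ℕ) :
    (alternatingWord a b (n + 1)).prod = (alternatingWord b a n).prod * b := by
  simp [alternatingWord_succ]

theorem prod_alternatingWord_succ' (a b : G) (n : ℕ) :
    (alternatingWord a b (n + 1)).prod =
      (if Even n then b else a) * (alternatingWord a b n).prod := by
  simp [alternatingWord_succ']

theorem prod_alternatingWord_two_mul (a b : G) (j : ℕ) :
    (alternatingWord a b (2 * j)).prod = (a * b) ^ j := by
  induction j with
  | zero => simp [alternatingWord]
  | succ j ih =>
    rw [show 2 * (j + 1) = 2 * j + 1 + 1 by ring, prod_alternatingWord_succ',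
      prod_alternatingWord_succ', ih, pow_succ']
    simp [mul_assoc]

theorem prod_alternatingWord_two_mul_add_one (a b : G) (j : ℕ) :
    (alternatingWord a b (2 * j + 1)).prod = b * (a * b) ^ j := by
  simp [prod_alternatingWord_succ', prod_alternatingWord_two_mul]

theorem prod_alternatingWord_comm_of_pow_eq_one (ha : a * a = 1) (hb : b * b = 1) {m : ℕ}
    (hm : (a * b) ^ m = 1) : (alternatingWord a b m).prod = (alternatingWord b a m).prod := by
  have hba : ∀ j : ℕ, (b * a) ^ j = ((a * b) ^ j)⁻¹ := fun j => by
    rw [← inv_pow, mul_inv_rev, inv_eq_of_mul_eq_one_left ha, inv_eq_of_mul_eq_one_left hb]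
  obtain ⟨j, rfl | rfl⟩ := Nat.even_or_odd' m
  · rw [prod_alternatingWord_two_mul, prod_alternatingWord_two_mul, hba,
      eq_inv_iff_mul_eq_one, ← pow_add, ← two_mul, hm]
  · rw [prod_alternatingWord_two_mul_add_one, prod_alternatingWord_two_mul_add_one, hba]
    set x := (a * b) ^ j
    have hx : a * b * (x * x) = 1 := by rw [← pow_add, ← two_mul, ← pow_succ', hm]
    rw [← inv_eq_of_mul_eq_one_left ha]
    calc b * x = a⁻¹ * (a * b * (x * x)) * x⁻¹ := by group
      _ = a⁻¹ * x⁻¹ := by rw [hx, mul_one]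

variable {S : Set G}

theorem prod_alternatingWord_mem_closure (ha : a ∈ S) (hb : b ∈ S) (n : ℕ) :
    (alternatingWord a b n).prod ∈ Subgroup.closure S :=
  (Subgroup.closure S).list_prod_mem fun _ hx => Subgroup.subset_closure <| by
    rcases mem_of_mem_alternatingWord hx with rfl | rfl <;> assumption

theorem wordLength_prod_alternatingWord_le (ha : a ∈ S) (hb : b ∈ S) (n : ℕ) :
    wordLength S (alternatingWord a b n).prod ≤ n :=
  (wordLength_prod_le fun _ hx => by
    rcases mem_of_mem_alternatingWord hx with rfl | rfl <;> assumption).trans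
    (CoxeterSystem.length_alternatingWord a b n).le

theorem wordLength_prod_alternatingWord_add_le (hS : ∀ s ∈ S, s * s = 1) (ha : a ∈ S)
    (hb : b ∈ S) (n j : ℕ) :
    wordLength S (alternatingWord a b (n + j)).prod ≤
      j + wordLength S (alternatingWord a b n).prod := by
  induction j with
  | zero => simp
  | succ j ih =>
    rw [← add_assoc, prod_alternatingWord_succ']
    have := wordLength_gen_mul_le hS (prod_alternatingWord_mem_closure ha hb (n + j))
      (s := if Even (n + j) then b else a) (by split_ifs <;> assumption)
    omega

/-- `alternatingWord a b n` ends in `b`: a reduced word for `w` cannot end in `a`, and after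
removing its last letter `b` the induction hypothesis applies with `a` and `b` exchanged. -/
theorem eq_prod_alternatingWord_of_wordLength_lt (ha : a * a = 1) (hb : b * b = 1) {w : G}
    (hw : w ∈ Subgroup.closure {a, b})
    (h : wordLength {a, b} w < wordLength {a, b} (w * a)) :
    w = (alternatingWord a b (wordLength {a, b} w)).prod := by
  induction hn : wordLength {a, b} w generalizing a b w with
  | zero => simp [eq_one_of_wordLength_eq_zero (by simp [ha, hb]) hw hn, alternatingWord]
  | succ k ih =>
    have hS : ∀ s ∈ ({a, b} : Set G), s * s = 1 := by simp [ha, hb]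
    obtain ⟨s, hs, hlt⟩ := exists_wordLength_mul_gen_lt hS hw (by omega)
    obtain rfl : s = b := hs.resolve_left (by rintro rfl; omega)
    have hwb : w * s ∈ Subgroup.closure {a, s} := mul_mem hw (Subgroup.subset_closure (by simp))
    have hle := wordLength_le_wordLength_mul_gen_add_one hS hw (s := s) (by simp)
    rw [Set.pair_comm a s] at hwb hlt hle hn
    have := ih hb ha hwb (by rwa [mul_assoc, hb, mul_one]) (by omega)
    rw [prod_alternatingWord_succ, ← this, mul_assoc, hb, mul_one]

/-- If moreover `(a * b) ^ m = 1`, such a `w` has length less than `m`: otherwise the braid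
relation shortens the reduced word `w * a` of length `ℓ w + 1`. -/
theorem wordLength_lt_of_pow_eq_one (ha : a * a = 1) (hb : b * b = 1) {m : ℕ} (hm : m ≠ 0)
    (hrel : (a * b) ^ m = 1) {w : G} (hw : w ∈ Subgroup.closure {a, b})
    (h : wordLength {a, b} w < wordLength {a, b} (w * a)) : wordLength {a, b} w < m := by
  by_contra! hmk
  set k := wordLength {a, b} w
  have hS : ∀ s ∈ ({a, b} : Set G), s * s = 1 := by simp [ha, hb]
  have hwa : w * a = (alternatingWord b a (m + 1 + (k - m))).prod := by
    rw [show m + 1 + (k - m) = k + 1 by omega, prod_alternatingWord_succ,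
      ← eq_prod_alternatingWord_of_wordLength_lt ha hb hw h]
  obtain ⟨n, rfl⟩ : ∃ n, m = n + 1 := ⟨m - 1, by omega⟩
  have hshort : (alternatingWord b a (n + 1 + 1)).prod = (alternatingWord a b n).prod := by
    rw [prod_alternatingWord_succ, prod_alternatingWord_comm_of_pow_eq_one ha hb hrel,
      prod_alternatingWord_succ, mul_assoc, ha, mul_one]
  have hwa_le := wordLength_prod_alternatingWord_add_le hS (a := b) (b := a) (by simp) (by simp)
    (n + 1 + 1) (k - (n + 1))
  rw [← hwa, hshort] at hwa_le
  have := wordLength_prod_alternatingWord_le (S := {a, b}) (a := a) (b := b) (by simp) (by simp) n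
  omega

end Dihedral

theorem Module.det_reflection {R M : Type*} [CommRing R] [AddCommGroup M] [Module R M]
    [Module.Free R M] [Module.Finite R M] {x : M} {f : Module.Dual R M} (h : f x = 2) :
    LinearEquiv.det (Module.reflection h) = -1 := by
  classical
  set b := Module.Free.chooseBasis R M
  have hmat : LinearMap.toMatrix b b (Module.reflection h).toLinearMap =
      1 + Matrix.replicateCol Unit (fun i => -b.repr x i) *
        Matrix.replicateRow Unit (fun j => f (b j)) := by
    ext i j
    simp [LinearMap.toMatrix_apply, Module.reflection_apply, Matrix.one_apply, Matrix.mul_apply,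
      Finsupp.single_apply, eq_comm, sub_eq_add_neg, mul_comm]
  have hdot : (fun j => f (b j)) ⬝ᵥ (fun i => -b.repr x i) = -2 := by
    simp only [dotProduct, mul_neg, Finset.sum_neg_distrib, ← h, neg_inj]
    conv_rhs => rw [← b.sum_repr x]
    simp only [map_sum, map_smul, smul_eq_mul, mul_comm]
  ext
  rw [LinearEquiv.coe_det, ← LinearMap.det_toMatrix b, hmat,
    Matrix.det_one_add_replicateCol_mul_replicateRow, hdot]
  norm_num

noncomputable def bilinReflection (B : LinearMap.BilinForm ℝ V) {α : V} (hα : B α α = 1) :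
    V ≃ₗ[ℝ] V :=
  Module.reflection (f := 2 • B.flip α) (x := α) (by simp [hα])

section BilinReflection

variable {B : LinearMap.BilinForm ℝ V} {α : V} (hα : B α α = 1)

theorem bilinReflection_apply (v : V) : bilinReflection B hα v = v - (2 * B v α) • α := by
  simp [bilinReflection, Module.reflection_apply]

theorem bilinReflection_apply_self : bilinReflection B hα α = -α :=
  Module.reflection_apply_self _

theorem bilinReflection_mul_self : bilinReflection B hα * bilinReflection B hα = 1 :=
  LinearEquiv.ext (Module.involutive_reflection _)

theorem det_bilinReflection [FiniteDimensional ℝ V] :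
    LinearEquiv.det (bilinReflection B hα) = -1 :=
  Module.det_reflection _

end BilinReflection

namespace IsBasedRootSystem

variable {B : LinearMap.BilinForm ℝ V} {Δ : Set V} (hbrs : IsBasedRootSystem B Δ)
include hbrs

theorem bilinReflection_mem_simpleReflections {α : V} (hα : α ∈ Δ) :
    bilinReflection B (hbrs.diag_one α hα) ∈ simpleReflections B Δ :=
  ⟨α, hα, bilinReflection_apply _⟩

theorem exists_eq_bilinReflection {g : V ≃ₗ[ℝ] V} (hg : g ∈ simpleReflections B Δ) :
    ∃ α, ∃ hα : α ∈ Δ, g = bilinReflection B (hbrs.diag_one α hα) := by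
  obtain ⟨α, hα, hg⟩ := hg
  exact ⟨α, hα, LinearEquiv.ext fun v => by rw [hg, bilinReflection_apply]⟩

theorem mul_self_of_mem_simpleReflections {g : V ≃ₗ[ℝ] V} (hg : g ∈ simpleReflections B Δ) :
    g * g = 1 := by
  obtain ⟨α, hα, rfl⟩ := hbrs.exists_eq_bilinReflection hg
  exact bilinReflection_mul_self _

theorem det_of_mem_simpleReflections [FiniteDimensional ℝ V] {g : V ≃ₗ[ℝ] V}
    (hg : g ∈ simpleReflections B Δ) : LinearEquiv.det g = -1 := by
  obtain ⟨α, hα, rfl⟩ := hbrs.exists_eq_bilinReflection hg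
  exact det_bilinReflection _

end IsBasedRootSystem

theorem Real.sin_pi_div_natCast_pos {m : ℕ} (hm : 2 ≤ m) : 0 < Real.sin (Real.pi / m) := by
  have hm' : (2 : ℝ) ≤ m := by exact_mod_cast hm
  apply Real.sin_pos_of_pos_of_lt_pi (by positivity)
  rw [div_lt_iff₀ (by positivity)]
  nlinarith [Real.pi_pos]

namespace Polynomial.Chebyshev

open Real

theorem S_eval_nonneg_of_two_le {t : ℝ} (ht : 2 ≤ t) {n : ℤ} (hn : -1 ≤ n) :
    0 ≤ (S ℝ n).eval t := by
  have key : ∀ k : ℕ, 0 ≤ (S ℝ (k - 1)).eval t ∧ (S ℝ (k - 1)).eval t ≤ (S ℝ k).eval t := by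
    intro k
    induction k with
    | zero => simp [S_neg_one]
    | succ k ih =>
      have hrec := congrArg (eval t) (S_add_one ℝ (k : ℤ))
      simp only [eval_sub, eval_mul, eval_X] at hrec
      push_cast
      simp only [add_sub_cancel_right, hrec]
      constructor <;> nlinarith
  obtain ⟨k, rfl⟩ : ∃ k : ℕ, n = k - 1 := ⟨(n + 1).toNat, by omega⟩
  exact (key k).1

variable {m : ℕ} (hm : 2 ≤ m)
include hm

theorem S_eval_two_mul_cos_pi_div (n : ℤ) :
    (S ℝ n).eval (2 * cos (π / m)) = sin ((n + 1) * (π / m)) / sin (π / m) := by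
  rw [← S_two_mul_real_cos, mul_div_cancel_right₀ _ (sin_pi_div_natCast_pos hm).ne']

theorem S_eval_two_mul_cos_pi_div_nonneg {n : ℤ} (h₁ : -1 ≤ n) (h₂ : n < m) :
    0 ≤ (S ℝ n).eval (2 * cos (π / m)) := by
  rw [S_eval_two_mul_cos_pi_div hm]
  refine div_nonneg (sin_nonneg_of_nonneg_of_le_pi ?_ ?_) (sin_pi_div_natCast_pos hm).le
  · have : (0 : ℝ) ≤ n + 1 := by exact_mod_cast (by omega : (0 : ℤ) ≤ n + 1)
    positivity
  · have : (n : ℝ) + 1 ≤ m := by exact_mod_cast (by omega : n + 1 ≤ (m : ℤ))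
    calc (n + 1) * (π / m) ≤ m * (π / m) := by gcongr
      _ = π := by field_simp

theorem S_eval_two_mul_cos_pi_div_two_mul :
    (S ℝ (2 * m)).eval (2 * cos (π / m)) = 1 := by
  rw [S_eval_two_mul_cos_pi_div hm]
  have : ((2 * m : ℤ) + 1 : ℝ) * (π / m) = π / m + 2 * π := by
    push_cast; field_simp; ring
  rw [this, sin_add_two_pi, div_self (sin_pi_div_natCast_pos hm).ne']

theorem S_eval_two_mul_cos_pi_div_two_mul_sub_one :
    (S ℝ (2 * m - 1)).eval (2 * cos (π / m)) = 0 := by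
  rw [S_eval_two_mul_cos_pi_div hm]
  have : ((2 * m - 1 : ℤ) + 1 : ℝ) * (π / m) = (2 : ℤ) * π := by
    push_cast; field_simp; ring
  rw [this, sin_int_mul_pi, zero_div]

end Polynomial.Chebyshev

section DihedralReflection

open CoxeterSystem (alternatingWord)
open Polynomial Polynomial.Chebyshev Real

theorem prod_alternatingWord_apply {R M : Type*} [CommRing R] [AddCommGroup M] [Module R M]
    {a b : M ≃ₗ[R] M} {α β : M} {t : R} (haα : a α = -α) (hbβ : b β = -β)
    (haβ : a β = β + t • α) (hbα : b α = α + t • β) (k : ℕ) :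
    (alternatingWord a b k).prod α =
      if Even k then (S R k).eval t • α + (S R (k - 1)).eval t • β
      else (S R (k - 1)).eval t • α + (S R k).eval t • β := by
  induction k with
  | zero => simp [CoxeterSystem.alternatingWord]
  | succ k ih =>
    have hrec := congrArg (eval t) (S_add_one R (k : ℤ))
    simp only [eval_sub, eval_mul, eval_X] at hrec
    rw [prod_alternatingWord_succ', LinearEquiv.mul_apply, ih]
    by_cases hk : Even k
    · simp only [hk, if_true, Nat.even_add_one, not_true, if_false, map_add, map_smul, hbα, hbβ]
      push_cast
      rw [add_sub_cancel_right, hrec]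
      module
    · simp only [hk, if_false, Nat.even_add_one, not_false_eq_true, if_true, map_add, map_smul,
        haα, haβ]
      push_cast
      rw [add_sub_cancel_right, hrec]
      module

variable {B : LinearMap.BilinForm ℝ V} {α β : V} (hα : B α α = 1) (hβ : B β β = 1)
  (hαβ : B β α = B α β)
include hα hβ hαβ

theorem exists_eq_smul_add_smul_add_of_sq_ne_one (hc : B α β ^ 2 ≠ 1) (v : V) :
    ∃ x y : ℝ, ∃ z : V, B z α = 0 ∧ B z β = 0 ∧ v = x • α + y • β + z := by
  have hc' : 1 - B α β ^ 2 ≠ 0 := sub_ne_zero.2 (Ne.symm hc)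
  refine ⟨(B v α - B α β * B v β) / (1 - B α β ^ 2), (B v β - B α β * B v α) / (1 - B α β ^ 2),
    _, ?_, ?_, (add_sub_cancel _ _).symm⟩ <;>
  · simp only [map_sub, map_add, map_smul, LinearMap.sub_apply, LinearMap.add_apply,
      LinearMap.smul_apply, smul_eq_mul, hα, hβ, hαβ]
    field_simp
    ring

/-- `(s_α s_β) ^ m` is the alternating word of length `2 m`, which fixes `α` and `β` since
`S_{2m} = 1` and `S_{2m-1} = 0` at `2 cos (π / m)`; it also fixes the `B`-orthogonal
complement of `α` and `β`, which is a complement of their span because `B α β ^ 2 ≠ 1`. -/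
theorem bilinReflection_mul_pow_eq_one {m : ℕ} (hm : 2 ≤ m) (hc : B α β = -cos (π / m)) :
    (bilinReflection B hα * bilinReflection B hβ) ^ m = 1 := by
  set a := bilinReflection B hα
  set b := bilinReflection B hβ
  have ht : 2 * cos (π / m) = -(2 * B α β) := by rw [hc]; ring
  have haβ : a β = β + (2 * cos (π / m)) • α := by rw [bilinReflection_apply, hαβ, ht]; module
  have hbα : b α = α + (2 * cos (π / m)) • β := by rw [bilinReflection_apply, ht]; module
  have rotate : ∀ {a b : V ≃ₗ[ℝ] V} {α β : V}, a α = -α → b β = -β →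
      a β = β + (2 * cos (π / m)) • α → b α = α + (2 * cos (π / m)) • β → ((a * b) ^ m) α = α :=
    fun haα hbβ haβ hbα => by
      rw [← prod_alternatingWord_two_mul, prod_alternatingWord_apply haα hbβ haβ hbα]
      simp [S_eval_two_mul_cos_pi_div_two_mul hm, S_eval_two_mul_cos_pi_div_two_mul_sub_one hm]
  have hfixα : ((a * b) ^ m) α = α :=
    rotate (bilinReflection_apply_self hα) (bilinReflection_apply_self hβ) haβ hbα
  have hfixβ : ((a * b) ^ m) β = β := by
    have := rotate (bilinReflection_apply_self hβ) (bilinReflection_apply_self hα) hbα haβ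
    rwa [← inv_eq_of_mul_eq_one_left (bilinReflection_mul_self hα),
      ← inv_eq_of_mul_eq_one_left (bilinReflection_mul_self hβ), ← mul_inv_rev, inv_pow,
      LinearEquiv.coe_inv, LinearEquiv.symm_apply_eq, eq_comm] at this
  have hfix_perp : ∀ z, B z α = 0 → B z β = 0 → ((a * b) ^ m) z = z := fun z hzα hzβ => by
    rw [LinearEquiv.pow_apply]
    refine Function.iterate_fixed ?_ m
    simp [a, b, bilinReflection_apply, hzα, hzβ]
  have hc2 : B α β ^ 2 ≠ 1 := by
    rw [hc, neg_sq]
    exact fun h => (sin_pi_div_natCast_pos hm).ne' (by nlinarith [sin_sq_add_cos_sq (π / m)])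
  ext v
  obtain ⟨x, y, z, hzα, hzβ, rfl⟩ := exists_eq_smul_add_smul_add_of_sq_ne_one hα hβ hαβ hc2 v
  simp [hfixα, hfixβ, hfix_perp z hzα hzβ]

theorem exists_nonneg_apply_eq_of_wordLength_lt
    (hcase : (∃ m : ℕ, 2 ≤ m ∧ B α β = -cos (π / m)) ∨ B α β ≤ -1) {w : V ≃ₗ[ℝ] V}
    (hw : w ∈ Subgroup.closure {bilinReflection B hα, bilinReflection B hβ})
    (hlen : wordLength {bilinReflection B hα, bilinReflection B hβ} w <
      wordLength {bilinReflection B hα, bilinReflection B hβ} (w * bilinReflection B hα)) :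
    ∃ p q : ℝ, 0 ≤ p ∧ 0 ≤ q ∧ w α = p • α + q • β := by
  set t := -(2 * B α β)
  have haβ : bilinReflection B hα β = β + t • α := by rw [bilinReflection_apply, hαβ]; module
  have hbα : bilinReflection B hβ α = α + t • β := by rw [bilinReflection_apply]; module
  rw [eq_prod_alternatingWord_of_wordLength_lt (bilinReflection_mul_self hα)
    (bilinReflection_mul_self hβ) hw hlen, prod_alternatingWord_apply
    (bilinReflection_apply_self hα) (bilinReflection_apply_self hβ) haβ hbα]
  set k := wordLength {bilinReflection B hα, bilinReflection B hβ} w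
  suffices 0 ≤ (S ℝ k).eval t ∧ 0 ≤ (S ℝ (k - 1)).eval t by
    split_ifs
    exacts [⟨_, _, this.1, this.2, rfl⟩, ⟨_, _, this.2, this.1, rfl⟩]
  rcases hcase with ⟨m, hm, hc⟩ | hc
  · have hk : k < m := wordLength_lt_of_pow_eq_one (bilinReflection_mul_self hα)
      (bilinReflection_mul_self hβ) (by omega) (bilinReflection_mul_pow_eq_one hα hβ hαβ hm hc)
      hw hlen
    have ht : t = 2 * cos (π / m) := by simp only [t, hc]; ring
    rw [ht]
    exact ⟨S_eval_two_mul_cos_pi_div_nonneg hm (by omega) (by omega),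
      S_eval_two_mul_cos_pi_div_nonneg hm (by omega) (by omega)⟩
  · have ht : 2 ≤ t := by linarith
    exact ⟨S_eval_nonneg_of_two_le ht (by omega), S_eval_nonneg_of_two_le ht (by omega)⟩

end DihedralReflection

section Cone

variable {X : Set V} {v w : V}

theorem subset_cone (X : Set V) : X ⊆ cone X :=
  fun x hx => ⟨1, fun _ => 1, fun _ => x, fun _ => zero_le_one, fun _ => hx, by simp⟩

theorem smul_add_smul_mem_cone (hv : v ∈ cone X) (hw : w ∈ cone X) {p q : ℝ} (hp : 0 ≤ p)
    (hq : 0 ≤ q) : p • v + q • w ∈ cone X := by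
  obtain ⟨n, c, x, hc, hx, rfl⟩ := hv
  obtain ⟨n', c', x', hc', hx', rfl⟩ := hw
  refine ⟨n + n', Fin.append (p • c) (q • c'), Fin.append x x', fun i => ?_, fun i => ?_, ?_⟩
  · exact Fin.addCases (fun i => by simpa using mul_nonneg hp (hc i))
      (fun i => by simpa using mul_nonneg hq (hc' i)) i
  · exact Fin.addCases (fun i => by simpa using hx i) (fun i => by simpa using hx' i) i
  · simp [Fin.sum_univ_add, Finset.smul_sum, smul_smul]

theorem eq_zero_of_mem_cone_of_neg_mem_cone (φ : V →ₗ[ℝ] ℝ) (hφ : ∀ x ∈ X, 0 < φ x)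
    (hv : v ∈ cone X) (hv' : -v ∈ cone X) : v = 0 := by
  have nonneg : ∀ u ∈ cone X, 0 ≤ φ u := by
    rintro _ ⟨n, c, x, hc, hx, rfl⟩
    simpa using Finset.sum_nonneg fun i _ => mul_nonneg (hc i) (hφ _ (hx i)).le
  obtain ⟨n, c, x, hc, hx, rfl⟩ := hv
  have hsum : ∑ i, c i * φ (x i) = 0 := by
    have := nonneg _ hv'
    have := nonneg _ ⟨n, c, x, hc, hx, rfl⟩
    simp only [map_neg, map_sum, map_smul, smul_eq_mul] at *
    linarith
  have hc0 : ∀ i, c i = 0 := fun i => by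
    have := (Finset.sum_eq_zero_iff_of_nonneg fun i _ => mul_nonneg (hc i) (hφ _ (hx i)).le).1
      hsum i (Finset.mem_univ i)
    exact (mul_eq_zero.1 this).resolve_right (hφ _ (hx i)).ne'
  simp [hc0]

end Cone

theorem map_mem_rootSystem {B : LinearMap.BilinForm ℝ V} {Δ : Set V} {w : V ≃ₗ[ℝ] V}
    (hw : w ∈ weylGroup B Δ) {x : V} (hx : x ∈ rootSystem B Δ) : w x ∈ rootSystem B Δ := by
  obtain ⟨u, hu, α, hα, rfl⟩ := hx
  exact ⟨w * u, mul_mem hw hu, α, hα, rfl⟩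

namespace IsBasedRootSystem

variable {B : LinearMap.BilinForm ℝ V} {Δ : Set V} (hbrs : IsBasedRootSystem B Δ)
include hbrs

theorem neg_mem_rootSystem {x : V} (hx : x ∈ rootSystem B Δ) : -x ∈ rootSystem B Δ := by
  obtain ⟨w, hw, α, hα, rfl⟩ := hx
  refine ⟨w * bilinReflection B (hbrs.diag_one α hα),
    mul_mem hw (Subgroup.subset_closure (hbrs.bilinReflection_mem_simpleReflections hα)), α, hα, ?_⟩
  rw [LinearEquiv.mul_apply, bilinReflection_apply_self, map_neg]

theorem zero_notMem_rootSystem : (0 : V) ∉ rootSystem B Δ := by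
  rintro ⟨w, -, α, hα, h0⟩
  have := hbrs.diag_one α hα
  rw [w.map_eq_zero_iff.1 h0.symm] at this
  simp at this

theorem eq_zero_of_mem_cone_of_neg_mem_cone {v : V} (hv : v ∈ cone Δ) (hv' : -v ∈ cone Δ) :
    v = 0 := by
  have hind : LinearIndepOn ℝ id Δ := hbrs.indep
  set b := Module.Basis.extend hind
  refine _root_.eq_zero_of_mem_cone_of_neg_mem_cone b.sumCoords (fun x hx => ?_) hv hv'
  have : b ⟨x, hind.subset_extend (Set.subset_univ _) hx⟩ = x := Module.Basis.extend_apply_self _ _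
  rw [← this, Module.Basis.sumCoords_self_apply]
  exact one_pos

theorem neg_notMem_positiveRoots {x : V} (hx : x ∈ positiveRoots B Δ) :
    -x ∉ positiveRoots B Δ := fun hx' =>
  hbrs.zero_notMem_rootSystem (hbrs.eq_zero_of_mem_cone_of_neg_mem_cone hx.2 hx'.2 ▸ hx.1)

variable [FiniteDimensional ℝ V]

/-- By induction on `ℓ w`: if `ℓ (w s_β) < ℓ w`, factor `w = v t` with `t` in the dihedral
subgroup `⟨s_α, s_β⟩`; then `t α ∈ cone {α, β}` and the induction hypothesis applies to `v`. -/
theorem apply_mem_cone_of_wordLength_lt {w : V ≃ₗ[ℝ] V} (hw : w ∈ weylGroup B Δ) {α : V}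
    (hα : α ∈ Δ) (hlen : wordLength (simpleReflections B Δ) w <
      wordLength (simpleReflections B Δ) (w * bilinReflection B (hbrs.diag_one α hα))) :
    w α ∈ cone Δ := by
  set S := simpleReflections B Δ
  have hS : ∀ s ∈ S, s * s = 1 := fun s hs => hbrs.mul_self_of_mem_simpleReflections hs
  induction hn : wordLength S w using Nat.strong_induction_on generalizing w α with
  | _ n ih =>
  rcases Nat.eq_zero_or_pos n with rfl | hpos
  · rw [eq_one_of_wordLength_eq_zero hS hw hn]
    exact subset_cone _ hα
  obtain ⟨s, hs, hlt⟩ := exists_wordLength_mul_gen_lt hS hw (by omega)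
  obtain ⟨β, hβ, rfl⟩ := hbrs.exists_eq_bilinReflection hs
  have hαβ : α ≠ β := by rintro rfl; omega
  obtain ⟨v, hv, t, ht, rfl, hvw, hva, hvb, hta⟩ := exists_mul_of_wordLength_mul_gen_lt hS
    LinearEquiv.det (fun s hs => hbrs.det_of_mem_simpleReflections hs)
    (hbrs.bilinReflection_mem_simpleReflections hα) (hbrs.bilinReflection_mem_simpleReflections hβ)
    hw hlen hlt
  obtain ⟨p, q, hp, hq, htα⟩ := exists_nonneg_apply_eq_of_wordLength_lt (hbrs.diag_one α hα)
    (hbrs.diag_one β hβ) (hbrs.symm β α) (hbrs.offdiag α hα β hβ hαβ) ht hta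
  rw [LinearEquiv.mul_apply, htα, map_add, map_smul, map_smul]
  exact smul_add_smul_mem_cone (ih _ (hn ▸ hvw) hv hα hva rfl) (ih _ (hn ▸ hvw) hv hβ hvb rfl)
    hp hq

theorem apply_mem_cone_or_neg_mem_cone {w : V ≃ₗ[ℝ] V} (hw : w ∈ weylGroup B Δ) {α : V}
    (hα : α ∈ Δ) : w α ∈ cone Δ ∨ -w α ∈ cone Δ := by
  have hs := hbrs.bilinReflection_mem_simpleReflections hα
  rcases lt_or_gt_of_ne (wordLength_mul_gen_ne
    (fun s hs => hbrs.mul_self_of_mem_simpleReflections hs) LinearEquiv.det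
    (fun s hs => hbrs.det_of_mem_simpleReflections hs) hw hs) with h | h
  · right
    have := hbrs.apply_mem_cone_of_wordLength_lt (mul_mem hw (Subgroup.subset_closure hs)) hα
      (by rwa [mul_assoc, bilinReflection_mul_self, mul_one])
    rwa [LinearEquiv.mul_apply, bilinReflection_apply_self, map_neg] at this
  · exact Or.inl (hbrs.apply_mem_cone_of_wordLength_lt hw hα h)

theorem mem_positiveRoots_or_neg_mem {x : V} (hx : x ∈ rootSystem B Δ) :
    x ∈ positiveRoots B Δ ∨ -x ∈ positiveRoots B Δ := by
  obtain ⟨w, hw, α, hα, rfl⟩ := hx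
  exact (hbrs.apply_mem_cone_or_neg_mem_cone hw hα).imp (⟨⟨w, hw, α, hα, rfl⟩, ·⟩)
    (⟨hbrs.neg_mem_rootSystem ⟨w, hw, α, hα, rfl⟩, ·⟩)

theorem positiveRoots_isTope {d : Set V → Set V} (hd : IsOMRS B Δ d) :
    IsTope (rootSystem B Δ) d (positiveRoots B Δ) := by
  refine ⟨fun _ hx => hx.1, hd.positive_closed.le, fun _ hx => hbrs.neg_notMem_positiveRoots hx,
    fun R hR _ hasymm hsub => Set.Subset.antisymm (fun x hx => ?_) hsub⟩
  exact (hbrs.mem_positiveRoots_or_neg_mem (hR hx)).resolve_right fun h => hasymm x hx (hsub h)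

end IsBasedRootSystem

namespace IsOMRS

variable {B : LinearMap.BilinForm ℝ V} {Δ : Set V} {d : Set V → Set V} (hd : IsOMRS B Δ d)
  {w : V ≃ₗ[ℝ] V} (hw : w ∈ weylGroup B Δ)
include hd hw

theorem image_closed_asymm {R : Set V} (hR : R ⊆ rootSystem B Δ) (hcl : d R ⊆ R)
    (hasymm : ∀ x ∈ R, -x ∉ R) :
    w '' R ⊆ rootSystem B Δ ∧ d (w '' R) ⊆ w '' R ∧ ∀ x ∈ w '' R, -x ∉ w '' R := by
  refine ⟨?_, ?_, ?_⟩
  · rintro _ ⟨x, hx, rfl⟩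
    exact map_mem_rootSystem hw (hR hx)
  · rw [hd.equivariant w hw R hR]
    exact Set.image_mono hcl
  · rintro _ ⟨x, hx, rfl⟩ ⟨y, hy, hyx⟩
    rw [← map_neg, w.injective.eq_iff] at hyx
    exact hasymm x hx (hyx ▸ hy)

theorem isTope_image {R : Set V} (hR : IsTope (rootSystem B Δ) d R) :
    IsTope (rootSystem B Δ) d (w '' R) := by
  obtain ⟨hRΦ, hcl, hasymm, hmax⟩ := hR
  obtain ⟨hwR, hwcl, hwasymm⟩ := hd.image_closed_asymm hw hRΦ hcl hasymm
  refine ⟨hwR, hwcl, hwasymm, fun R' hR' hcl' hasymm' hsub => ?_⟩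
  obtain ⟨h₁, h₂, h₃⟩ := hd.image_closed_asymm (inv_mem hw) hR' hcl' hasymm'
  have hR'' : ⇑w⁻¹ '' R' = R := hmax _ h₁ h₂ h₃ fun x hx => ⟨w x, hsub ⟨x, hx, rfl⟩, by simp⟩
  rw [← hR'', LinearEquiv.coe_inv]
  exact (w.toEquiv.image_symm_image R').symm

end IsOMRS

/-- for any based root system and any OMRS `d` on `(Φ, Φ⁺)`, each set
`w·Φ⁺` for `w ∈ W` is a tope of `d`; in particular `Φ⁺` itself is a tope. -/
theorem wPositiveRoots_isTope [FiniteDimensional ℝ V]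
    (B : LinearMap.BilinForm ℝ V) (Δ : Set V)
    (hbrs : IsBasedRootSystem B Δ)
    (d : Set V → Set V) (hd : IsOMRS B Δ d) :
    (∀ w ∈ weylGroup B Δ, IsTope (rootSystem B Δ) d (⇑w '' positiveRoots B Δ)) ∧
      IsTope (rootSystem B Δ) d (positiveRoots B Δ) :=
  ⟨fun _ hw => hd.isTope_image hw (hbrs.positiveRoots_isTope hd), hbrs.positiveRoots_isTope hd⟩
end
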